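/- arXiv:1111.5425 — 2 statements merged into one kernel-verified Lean document; each statement's English description precedes it below -/
import Mathlib

section
/- The Paterson map γ : A* × A* → M₃(ℤ), γ(u,w) = [[m^{|u|},0,0],[0,m^{|w|},0],[σ(u),σ(w),1]], is an injective monoid homomorphism (a monomorphism) for m ≥ 2. -/
/-- The `m`-adic value of a word over the alphabet `{1,…,m}`. -/
def madicValue (m : ℕ) : List (Fin m) → ℕ
  | [] => 0
  | a :: w => ((a : ℕ) + 1) * m ^ w.length + madicValue m w

lemma madic_append (m : ℕ) (u v : List (Fin m)) :
    madicValue m (u ++ v) = madicValue m u * m ^ v.length + madicValue m v := by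
  induction u with
  | nil => simp [madicValue]
  | cons a t ih =>
      simp [madicValue, ih, List.length_append, pow_add]
      ring

lemma madic_lb (m' : ℕ) : ∀ t : List (Fin (m' + 1)),
    (m' + 1) ^ t.length ≤ m' * madicValue (m' + 1) t + 1 := by
  intro t
  induction t with
  | nil => simp [madicValue]
  | cons a t ih =>
      simp only [madicValue, List.length_cons, pow_succ]
      have h1 : m' * ((m'+1) ^ t.length) ≤ m' * (((a : ℕ) + 1) * (m'+1) ^ t.length) :=
        Nat.mul_le_mul_left _ (Nat.le_mul_of_pos_left _ (Nat.succ_pos _))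
      nlinarith [ih, h1]

lemma madic_ub (m' : ℕ) : ∀ t : List (Fin (m' + 1)),
    m' * madicValue (m' + 1) t + (m' + 1) ≤ (m' + 1) ^ (t.length + 1) := by
  intro t
  induction t with
  | nil => simp [madicValue]
  | cons a t ih =>
      simp only [madicValue, List.length_cons, pow_succ]
      have ha : (a : ℕ) + 1 ≤ m' + 1 := a.2
      have h1 : m' * (((a : ℕ) + 1) * (m'+1) ^ t.length) ≤ m' * ((m'+1) * (m'+1) ^ t.length) :=
        Nat.mul_le_mul_left _ (Nat.mul_le_mul_right _ ha)
      rw [pow_succ] at ih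
      nlinarith [ih, h1]

lemma madic_inj (m : ℕ) (hm : 2 ≤ m) : ∀ u u' : List (Fin m),
    u.length = u'.length → madicValue m u = madicValue m u' → u = u' := by
  obtain ⟨m', rfl⟩ : ∃ m', m = m' + 1 := ⟨m - 1, by omega⟩
  have hm' : 1 ≤ m' := by omega
  intro u
  induction u with
  | nil => intro u' h _; cases u' <;> simp_all
  | cons a t ih =>
      intro u' hl hv
      cases u' with
      | nil => simp at hl
      | cons a' t' =>
          simp only [List.length_cons, Nat.succ_inj] at hl
          simp only [madicValue, hl] at hv
          set B := (m' + 1) ^ t'.length with hB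
          have hpos : 1 ≤ B := Nat.one_le_pow _ _ (by omega)
          have key : ∀ x y : List (Fin (m'+1)), x.length = t'.length → y.length = t'.length →
              madicValue (m'+1) x ≤ madicValue (m'+1) y + (B - 1) := by
            intro x y hx hy
            have hub := madic_ub m' x
            have hlb := madic_lb m' y
            rw [hx, pow_succ, ← hB] at hub
            rw [hy, ← hB] at hlb
            have hsub : m' * (B - 1) + m' * 1 = m' * B := by
              rw [← Nat.mul_add]; congr 1; omega
            have h3 : m' * madicValue (m'+1) x ≤ m' * (madicValue (m'+1) y + (B - 1)) := by
              rw [Nat.mul_add]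
              nlinarith [hub, hlb, hsub]
            exact Nat.le_of_mul_le_mul_left h3 (by omega)
          have b1 := key t t' hl rfl
          have b2 := key t' t rfl hl
          have ha : (a : ℕ) = (a' : ℕ) := by
            rcases Nat.lt_trichotomy (a : ℕ) (a' : ℕ) with h | h | h
            · exfalso
              have hstep : ((a:ℕ)+1) * B + B ≤ ((a':ℕ)+1) * B := by
                calc ((a:ℕ)+1) * B + B = ((a:ℕ)+2) * B := by ring
                  _ ≤ ((a':ℕ)+1) * B := Nat.mul_le_mul_right _ (by omega)
              omega
            · exact h
            · exfalso
              have hstep : ((a':ℕ)+1) * B + B ≤ ((a:ℕ)+1) * B := by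
                calc ((a':ℕ)+1) * B + B = ((a':ℕ)+2) * B := by ring
                  _ ≤ ((a:ℕ)+1) * B := Nat.mul_le_mul_right _ (by omega)
              omega
          have hvd : madicValue (m'+1) t = madicValue (m'+1) t' := by
            rw [ha] at hv; omega
          simp [Fin.ext ha, ih t' hl hvd]

/-- Paterson's map `γ(u,w) = [[m^{|u|},0,0],[0,m^{|w|},0],[σ(u),σ(w),1]]`. -/
def patersonMap (m : ℕ) (u w : List (Fin m)) : Matrix (Fin 3) (Fin 3) ℤ :=
  !![(m : ℤ) ^ u.length, 0, 0;
     0, (m : ℤ) ^ w.length, 0;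
     (madicValue m u : ℤ), (madicValue m w : ℤ), 1]

/-- For `m ≥ 2`, Paterson's map `γ : A* × A* → M₃(ℤ)` is an injective monoid
homomorphism: it maps the pair of empty words to the identity, intertwines
componentwise concatenation with matrix multiplication, and is injective. -/
theorem patersonMap_monoidMonomorphism (m : ℕ) (hm : 2 ≤ m) :
    (patersonMap m [] [] = 1) ∧
      (∀ u u' w w' : List (Fin m),
        patersonMap m (u ++ u') (w ++ w') = patersonMap m u w * patersonMap m u' w') ∧
      Function.Injective (fun p : List (Fin m) × List (Fin m) => patersonMap m p.1 p.2) := by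
  refine ⟨?_, ?_, ?_⟩
  · simp [patersonMap, madicValue, Matrix.one_fin_three]
  · intro u u' w w'
    ext i j
    fin_cases i <;> fin_cases j <;>
      simp [patersonMap, Matrix.mul_fin_three, List.length_append, madic_append, pow_add] <;>
      push_cast <;> ring
  · rintro ⟨u, w⟩ ⟨u', w'⟩ h
    simp only at h
    have h00 := congrFun (congrFun h 0) 0
    have h11 := congrFun (congrFun h 1) 1
    have h20 := congrFun (congrFun h 2) 0
    have h21 := congrFun (congrFun h 2) 1
    simp only [patersonMap, Matrix.cons_val', Matrix.cons_val_zero, Matrix.cons_val_one,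
      Matrix.head_cons, Matrix.empty_val', Matrix.cons_val_fin_one, Matrix.head_fin_const,
      Matrix.of_apply, Matrix.cons_val_two, Matrix.tail_cons] at h00 h11 h20 h21
    have hlu : u.length = u'.length := by
      have : ((m ^ u.length : ℕ) : ℤ) = ((m ^ u'.length : ℕ) : ℤ) := by push_cast; exact h00
      exact Nat.pow_right_injective hm (Nat.cast_injective this)
    have hlw : w.length = w'.length := by
      have : ((m ^ w.length : ℕ) : ℤ) = ((m ^ w'.length : ℕ) : ℤ) := by push_cast; exact h11
      exact Nat.pow_right_injective hm (Nat.cast_injective this)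
    have hvu : madicValue m u = madicValue m u' := Nat.cast_injective h20
    have hvw : madicValue m w = madicValue m w' := Nat.cast_injective h21
    exact Prod.ext (madic_inj m hm u u' hlu hvu) (madic_inj m hm w w' hlw hvw)
end

section
/- For d ≥ 2 and ν ∈ (-√(d-1), 1/√(d-1)), the map T : M_d(ℂ) → M_d(ℂ) given by T(X) = (tr X / d) · (1 + (ν/√(d-1))(1 - dψ)), where ψ is a rank-one projector, is completely positive and trace-preserving. -/
/-!
With `c = ν/√(d-1)`, `T X = (tr X / d) • N` where
`N = 1 + c(1 - dψ) = (1 + c)(1 - ψ) + (1 + c - cd)ψ` is a combination of the complementary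
projections `1 - ψ` and `ψ`. The range of `ν` is exactly what makes both coefficients
nonnegative (`1 + c - cd = 1 - ν√(d-1)`), so `N` is positive semidefinite, and the Choi matrix
`1 ⊗ N/d` is too. Trace preservation is `tr N = d`, since `tr ψ = 1`.
-/

open Matrix
open scoped ComplexOrder

/-- The Choi matrix `C(T) = Σ_{ij} E_{ij} ⊗ T(E_{ij})` of a linear map on
`M_d(ℂ)`, as a matrix indexed by pairs: `C(T)_((i,k),(j,l)) = T(E_{ij})_{kl}`. -/
def choiMatrix {d : ℕ}
    (T : Matrix (Fin d) (Fin d) ℂ →ₗ[ℂ] Matrix (Fin d) (Fin d) ℂ) :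
    Matrix (Fin d × Fin d) (Fin d × Fin d) ℂ :=
  fun p q => T (Matrix.single p.1 q.1 1) p.2 q.2

open scoped Kronecker MatrixOrder

namespace Matrix

variable {n : Type*} [Fintype n]

theorem isStarProjection_vecMulVec_self_star {v : n → ℂ} (hv : star v ⬝ᵥ v = 1) :
    IsStarProjection (vecMulVec v (star v)) where
  isIdempotentElem := by
    rw [IsIdempotentElem, vecMulVec_mul_vecMulVec, hv, one_smul]
  isSelfAdjoint := by
    rw [IsSelfAdjoint, star_eq_conjTranspose, conjTranspose_vecMulVec, star_star]

theorem IsStarProjection.posSemidef_one_add_smul_one_sub_smul [DecidableEq n] {ψ : Matrix n n ℂ}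
    (hψ : IsStarProjection ψ) {c r : ℝ} (h₁ : 0 ≤ 1 + c) (h₂ : 0 ≤ 1 + c - c * r) :
    (1 + (c : ℂ) • (1 - (r : ℂ) • ψ)).PosSemidef := by
  have hsplit : 1 + (c : ℂ) • (1 - (r : ℂ) • ψ)
      = ((1 + c : ℝ) : ℂ) • (1 - ψ) + ((1 + c - c * r : ℝ) : ℂ) • ψ := by
    push_cast
    module
  rw [hsplit]
  exact (hψ.one_sub_nonneg.posSemidef.smul (Complex.zero_le_real.2 h₁)).add
    (hψ.nonneg.posSemidef.smul (Complex.zero_le_real.2 h₂))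

end Matrix

theorem choiMatrix_eq_one_kronecker {d : ℕ}
    {T : Matrix (Fin d) (Fin d) ℂ →ₗ[ℂ] Matrix (Fin d) (Fin d) ℂ} {M : Matrix (Fin d) (Fin d) ℂ}
    (hT : ∀ X, T X = X.trace • M) :
    choiMatrix T = 1 ⊗ₖ M := by
  ext ⟨i, k⟩ ⟨j, l⟩
  rcases eq_or_ne i j with rfl | hij
  · simp [choiMatrix, hT, trace_single_eq_same]
  · simp [choiMatrix, hT, trace_single_eq_of_ne _ _ _ hij, one_apply_ne hij]

theorem depolarizing_coeff_nonneg {r ν : ℝ} (hr : 1 < r)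
    (hν : ν ∈ Set.Ioo (-Real.sqrt (r - 1)) (1 / Real.sqrt (r - 1))) :
    0 ≤ 1 + ν / Real.sqrt (r - 1) ∧
      0 ≤ 1 + ν / Real.sqrt (r - 1) - ν / Real.sqrt (r - 1) * r := by
  obtain ⟨hlo, hhi⟩ := hν
  have hs : 0 < Real.sqrt (r - 1) := Real.sqrt_pos.2 (by linarith)
  have hs2 : Real.sqrt (r - 1) ^ 2 = r - 1 := Real.sq_sqrt (by linarith)
  rw [lt_div_iff₀ hs] at hhi
  constructor
  · rw [one_add_div hs.ne']
    exact div_nonneg (by linarith) hs.le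
  · have : 1 + ν / Real.sqrt (r - 1) - ν / Real.sqrt (r - 1) * r
        = 1 - ν * Real.sqrt (r - 1) := by
      field_simp
      linear_combination ν * hs2
    rw [this]
    linarith

/-- For `d ≥ 2` and `ν ∈ (-√(d-1), 1/√(d-1))`, the map
`T(X) = (tr X / d) · (1 + (ν/√(d-1))(1 - dψ))`, `ψ` a rank-one projector,
is completely positive (its Choi matrix is positive semidefinite) and
trace-preserving. -/
theorem depolarizing_like_map_cptp
    {d : ℕ} (hd : 2 ≤ d) (ν : ℝ)
    (hν : ν ∈ Set.Ioo (-Real.sqrt ((d : ℝ) - 1)) (1 / Real.sqrt ((d : ℝ) - 1)))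
    (v : Fin d → ℂ) (hv : star v ⬝ᵥ v = 1)
    (T : Matrix (Fin d) (Fin d) ℂ →ₗ[ℂ] Matrix (Fin d) (Fin d) ℂ)
    (hT : ∀ X, T X = (X.trace / d) •
        (1 + ((ν / Real.sqrt ((d : ℝ) - 1) : ℝ) : ℂ) •
          (1 - (d : ℂ) • Matrix.vecMulVec v (star v)))) :
    (choiMatrix T).PosSemidef ∧ ∀ X, (T X).trace = X.trace := by
  set ψ := vecMulVec v (star v)
  set N := 1 + ((ν / Real.sqrt ((d : ℝ) - 1) : ℝ) : ℂ) • (1 - (d : ℂ) • ψ)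
  have hd₁ : (1 : ℝ) < d := by exact_mod_cast hd
  have hd₀ : (d : ℂ) ≠ 0 := by exact_mod_cast (zero_lt_two.trans_le hd).ne'
  obtain ⟨h₁, h₂⟩ := depolarizing_coeff_nonneg hd₁ hν
  have hN : N.PosSemidef := by
    simpa only [Complex.ofReal_natCast] using
      (isStarProjection_vecMulVec_self_star hv).posSemidef_one_add_smul_one_sub_smul h₁ h₂
  have hψtr : ψ.trace = 1 := by rw [trace_vecMulVec, dotProduct_comm, hv]
  refine ⟨?_, fun X => ?_⟩
  · have hTN : ∀ X, T X = X.trace • ((d : ℂ)⁻¹ • N) := fun X => by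
      rw [hT, div_eq_mul_inv, mul_smul]
    rw [choiMatrix_eq_one_kronecker hTN]
    exact PosSemidef.one.kronecker (hN.smul (by positivity))
  · rw [hT, trace_smul, trace_add, trace_smul, trace_sub, trace_smul, trace_one, hψtr,
      Fintype.card_fin, smul_eq_mul, smul_eq_mul, smul_eq_mul]
    field_simp
    ring
end
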